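/- Let K be a field, let α, β ∈ K, and let r ∈ K be a root of the polynomial X² − αX − β. Then there is a surjective K-algebra homomorphism from the down-up algebra A(α, β, 0) onto the coordinate algebra of the quantum plane B(r), sending d to a and u to b. -/
import Mathlib


noncomputable section

open FreeAlgebra

/-- Defining relations of the down-up algebra `A(α, β, γ)`: the generator `ι K 0`
plays the role of `d` and `ι K 1` plays the role of `u`. -/
inductive DownUpRel (K : Type) [Field K] (α β γ : K) :
    FreeAlgebra K (Fin 2) → FreeAlgebra K (Fin 2) → Prop
  | rel1 : DownUpRel K α β γ
      (ι K (0 : Fin 2) * ι K (0 : Fin 2) * ι K (1 : Fin 2))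
      (α • (ι K (0 : Fin 2) * ι K (1 : Fin 2) * ι K (0 : Fin 2)) +
        β • (ι K (1 : Fin 2) * ι K (0 : Fin 2) * ι K (0 : Fin 2)) +
        γ • ι K (0 : Fin 2))
  | rel2 : DownUpRel K α β γ
      (ι K (0 : Fin 2) * ι K (1 : Fin 2) * ι K (1 : Fin 2))
      (α • (ι K (1 : Fin 2) * ι K (0 : Fin 2) * ι K (1 : Fin 2)) +
        β • (ι K (1 : Fin 2) * ι K (1 : Fin 2) * ι K (0 : Fin 2)) +
        γ • ι K (1 : Fin 2))

/-- The down-up algebra `A(α, β, γ)`. -/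
abbrev DownUpAlgebra (K : Type) [Field K] (α β γ : K) : Type :=
  RingQuot (DownUpRel K α β γ)

/-- The generator `d` of the down-up algebra. -/
def DownUpAlgebra.d (K : Type) [Field K] (α β γ : K) : DownUpAlgebra K α β γ :=
  RingQuot.mkAlgHom K (DownUpRel K α β γ) (ι K (0 : Fin 2))

/-- The generator `u` of the down-up algebra. -/
def DownUpAlgebra.u (K : Type) [Field K] (α β γ : K) : DownUpAlgebra K α β γ :=
  RingQuot.mkAlgHom K (DownUpRel K α β γ) (ι K (1 : Fin 2))

/-- Defining relation of the quantum plane `B(q)`: `a * b = q • (b * a)`, where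
`ι K 0` plays the role of `a` and `ι K 1` plays the role of `b`. -/
inductive QuantumPlaneRel (K : Type) [Field K] (q : K) :
    FreeAlgebra K (Fin 2) → FreeAlgebra K (Fin 2) → Prop
  | rel : QuantumPlaneRel K q (ι K (0 : Fin 2) * ι K (1 : Fin 2))
      (q • (ι K (1 : Fin 2) * ι K (0 : Fin 2)))

/-- The coordinate algebra of the quantum plane `B(q)`. -/
abbrev QuantumPlane (K : Type) [Field K] (q : K) : Type :=
  RingQuot (QuantumPlaneRel K q)

/-- The generator `a` of the quantum plane. -/
def QuantumPlane.a (K : Type) [Field K] (q : K) : QuantumPlane K q :=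
  RingQuot.mkAlgHom K (QuantumPlaneRel K q) (ι K (0 : Fin 2))

/-- The generator `b` of the quantum plane. -/
def QuantumPlane.b (K : Type) [Field K] (q : K) : QuantumPlane K q :=
  RingQuot.mkAlgHom K (QuantumPlaneRel K q) (ι K (1 : Fin 2))

/-- If `r` is a root of `X² - αX - β`, then there is a surjective `K`-algebra
homomorphism from the down-up algebra `A(α, β, 0)` onto the coordinate algebra of the
quantum plane `B(r)`, sending `d` to `a` and `u` to `b`. -/
theorem downUp_surjects_onto_quantumPlane (K : Type) [Field K] (α β r : K)
    (hr : r ^ 2 - α * r - β = 0) :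
    ∃ f : DownUpAlgebra K α β 0 →ₐ[K] QuantumPlane K r,
      Function.Surjective f ∧
      f (DownUpAlgebra.d K α β 0) = QuantumPlane.a K r ∧
      f (DownUpAlgebra.u K α β 0) = QuantumPlane.b K r := by
  have hβ : β = r ^ 2 - α * r := by linear_combination -hr
  set g := RingQuot.mkAlgHom K (QuantumPlaneRel K r) with hg
  have hab : g (ι K (0 : Fin 2)) * g (ι K (1 : Fin 2)) =
      r • (g (ι K (1 : Fin 2)) * g (ι K (0 : Fin 2))) := by
    rw [← map_mul, ← map_mul, ← map_smul]
    exact RingQuot.mkAlgHom_rel K QuantumPlaneRel.rel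
  set A := g (ι K (0 : Fin 2)) with hA
  set B := g (ι K (1 : Fin 2)) with hB
  have hrel : ∀ ⦃x y : FreeAlgebra K (Fin 2)⦄, DownUpRel K α β 0 x y → g x = g y := by
    intro x y h
    cases h with
    | rel1 =>
        simp only [map_add, map_mul, map_smul, ← hA, ← hB, zero_smul, add_zero]
        rw [mul_assoc, hab, mul_smul_comm, ← mul_assoc, hab, smul_mul_assoc,
          smul_smul]
        simp only [smul_smul]
        rw [← add_smul]
        congr 1
        linear_combination hr
    | rel2 =>
        simp only [map_add, map_mul, map_smul, ← hA, ← hB, zero_smul, add_zero]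
        rw [hab, smul_mul_assoc, mul_assoc, hab, mul_smul_comm, smul_smul]
        simp only [smul_smul, mul_assoc]
        rw [← add_smul]
        congr 1
        linear_combination hr
  refine ⟨RingQuot.liftAlgHom K ⟨g, hrel⟩, ?_, ?_, ?_⟩
  · intro z
    obtain ⟨w, hw⟩ := RingQuot.mkAlgHom_surjective K (QuantumPlaneRel K r) z
    exact ⟨RingQuot.mkAlgHom K (DownUpRel K α β 0) w, by
      rw [RingQuot.liftAlgHom_mkAlgHom_apply, ← hw]⟩
  · exact RingQuot.liftAlgHom_mkAlgHom_apply K g hrel (ι K (0 : Fin 2))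
  · exact RingQuot.liftAlgHom_mkAlgHom_apply K g hrel (ι K (1 : Fin 2))

end
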